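/- Let Λ = Aℤ² be a lattice in ℤ × ℝ with generator matrix A = [[a,b],[c,d]], where a,b ∈ ℤ, c,d ∈ ℚ, and det(A) = 1/2. Write c = p/q and d = p'/q' with gcd(p,q) = gcd(p',q') = 1, p,q,p',q' ∈ ℤ. Set N = qq'/gcd(pq', p'q). Then N/2 ∈ ℤ and Λ possesses a uniquely determined generator matrix of the form A' = [[N/2, b'],[0, 1/N]] with b' ∈ ℤ and 0 ≤ b' < N/2; that is, there is exactly one such b' with A'ℤ² = Λ. -/

import Mathlib

/-!
Put `g = gcd(pq', p'q)`, `s = pq'/g`, `t = p'q/g`. Then `s` and `t` are coprime, the second row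
of `A` is `(s, t)/N`, and `det A = 1/2` becomes `N = 2(at - bs)`. If `su + tv = 1`, the unimodular
matrix `[[t, u], [-s, v]]` carries `A` to the upper triangular basis `[[N/2, au + bv], [0, 1/N]]`.
Two bases `[[K, y], [0, δ]]` and `[[K, y'], [0, δ]]` span the same lattice exactly when
`y ≡ y' mod K`, so `b'` is the least non-negative residue of `au + bv` modulo `N/2`.
-/

/-- The lattice `A ℤ²` generated by a real `2 × 2` matrix `A`. -/
def latticePts (A : Matrix (Fin 2) (Fin 2) ℝ) : Set (Fin 2 → ℝ) :=
  {x | ∃ m n : ℤ, x = A.mulVec ![(m : ℝ), (n : ℝ)]}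

open Matrix

lemma latticePts_eq_range (A : Matrix (Fin 2) (Fin 2) ℝ) :
    latticePts A = Set.range fun v : Fin 2 → ℤ => A *ᵥ ((↑) ∘ v) := by
  ext x
  constructor
  · rintro ⟨m, n, rfl⟩
    exact ⟨![m, n], by congr 1⟩
  · rintro ⟨v, rfl⟩
    exact ⟨v 0, v 1, by congr 1⟩

lemma latticePts_mul_of_isUnit_det (A : Matrix (Fin 2) (Fin 2) ℝ) {U : Matrix (Fin 2) (Fin 2) ℤ}
    (hU : IsUnit U.det) : latticePts (A * U.map (↑)) = latticePts A := by
  have hcast (w : Fin 2 → ℤ) : U.map (↑) *ᵥ ((↑) ∘ w : Fin 2 → ℝ) = (↑) ∘ (U *ᵥ w) := by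
    ext i; exact (RingHom.map_mulVec (Int.castRingHom ℝ) U w i).symm
  rw [latticePts_eq_range, latticePts_eq_range]
  apply subset_antisymm
  · rintro _ ⟨w, rfl⟩
    exact ⟨U *ᵥ w, by simp only [← mulVec_mulVec, hcast]⟩
  · rintro _ ⟨w, rfl⟩
    refine ⟨U⁻¹ *ᵥ w, ?_⟩
    dsimp only
    rw [← mulVec_mulVec, hcast, mulVec_mulVec, mul_nonsing_inv U hU, one_mulVec]

lemma latticePts_upperTriangular_eq_iff (α y y' δ : ℝ) (hδ : δ ≠ 0) :
    latticePts !![α, y; 0, δ] = latticePts !![α, y'; 0, δ] ↔ ∃ m : ℤ, y = y' + m * α := by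
  constructor
  · intro h
    have hmem : ![y, δ] ∈ latticePts !![α, y; 0, δ] := ⟨0, 1, by ext i; fin_cases i <;> simp⟩
    obtain ⟨m, n, hmn⟩ := h ▸ hmem
    have h0 : y = m * α + n * y' := by simpa using congrFun hmn 0
    have hn : (n : ℝ) = 1 := (mul_eq_right₀ hδ).1 (by simpa using (congrFun hmn 1).symm)
    exact ⟨m, by rw [h0, hn]; ring⟩
  · rintro ⟨m, rfl⟩
    have hdet : IsUnit (!![1, m; 0, 1] : Matrix (Fin 2) (Fin 2) ℤ).det := by simp [det_fin_two_of]
    rw [← latticePts_mul_of_isUnit_det !![α, y'; 0, δ] hdet]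
    congr 1
    ext i j
    fin_cases i <;> fin_cases j <;>
      simp only [mul_apply, Fin.sum_univ_two, map_apply, of_apply, cons_val', cons_val_zero,
        cons_val_one, cons_val_fin_one, Fin.zero_eta, Fin.mk_one, Fin.isValue] <;> push_cast <;> ring

lemma latticePts_upperTriangular_intCast_eq_iff (K y y' : ℤ) {δ : ℝ} (hδ : δ ≠ 0) :
    latticePts !![(K : ℝ), y; 0, δ] = latticePts !![(K : ℝ), y'; 0, δ] ↔ y ≡ y' [ZMOD K] := by
  rw [latticePts_upperTriangular_eq_iff _ _ _ _ hδ, Int.modEq_comm, Int.modEq_iff_add_fac]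
  exact exists_congr fun m ↦ by rw [mul_comm]; exact_mod_cast Iff.rfl

lemma exists_latticePts_eq_upperTriangular (α β r : ℝ) {s t : ℤ} (hst : IsCoprime s t) :
    ∃ u v : ℤ, latticePts !![α, β; s * r, t * r] =
      latticePts !![α * t - β * s, α * u + β * v; 0, r] := by
  obtain ⟨u, v, huv⟩ := hst
  have hdet : IsUnit (!![t, u; -s, v] : Matrix (Fin 2) (Fin 2) ℤ).det := by
    rw [det_fin_two_of]; convert isUnit_one; linear_combination huv
  refine ⟨u, v, ?_⟩
  rw [← latticePts_mul_of_isUnit_det !![α, β; s * r, t * r] hdet]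
  have huvR : (u : ℝ) * s + v * t = 1 := by exact_mod_cast huv
  congr 1
  ext i j
  fin_cases i <;> fin_cases j <;>
    simp only [mul_apply, Fin.sum_univ_two, map_apply, of_apply, cons_val', cons_val_zero,
      cons_val_one, cons_val_fin_one, Fin.zero_eta, Fin.mk_one, Fin.isValue] <;> push_cast
  · ring
  · ring
  · linear_combination r * huvR

lemma existsUnique_modEq_of_pos (a : ℤ) {K : ℤ} (hK : 0 < K) :
    ∃! z : ℤ, 0 ≤ z ∧ z < K ∧ z ≡ a [ZMOD K] := by
  refine ⟨a % K, ⟨Int.emod_nonneg a hK.ne', Int.emod_lt_of_pos a hK, Int.mod_modEq a K⟩, ?_⟩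
  rintro z ⟨hz0, hzK, hz⟩
  rw [← Int.emod_eq_of_lt hz0 hzK]
  exact hz

lemma two_mul_sub_eq_mul_of_det_eq_half (a b p q p' q' : ℤ) (hq : q ≠ 0) (hq' : q' ≠ 0)
    (hdet : (a : ℝ) * ((p' : ℝ) / (q' : ℝ)) - (b : ℝ) * ((p : ℝ) / (q : ℝ)) = 1 / 2) :
    2 * (a * (p' * q) - b * (p * q')) = q * q' := by
  have hqR : (q : ℝ) ≠ 0 := by exact_mod_cast hq
  have hq'R : (q' : ℝ) ≠ 0 := by exact_mod_cast hq'
  field_simp at hdet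
  have h : (2 : ℝ) * (a * (p' * q) - b * (p * q')) = q * q' := by linear_combination hdet
  exact_mod_cast h

lemma intCast_div_eq_of_mul_eq {p q q' g s n : ℤ} (hq : q ≠ 0) (hn : n ≠ 0) (hg : g ≠ 0)
    (hs : p * q' = g * s) (hgn : g * n = q * q') : (p : ℝ) / q = s * (1 / n) := by
  have h : p * n = q * s := mul_left_cancel₀ hg (by linear_combination p * hgn + q * hs)
  have hqR : (q : ℝ) ≠ 0 := by exact_mod_cast hq
  have hnR : (n : ℝ) ≠ 0 := by exact_mod_cast hn
  field_simp
  exact_mod_cast h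

lemma exists_isCoprime_of_det_eq_half (a b p q p' q' : ℤ) (hq : 0 < q) (hq' : 0 < q')
    (hdet : (a : ℝ) * ((p' : ℝ) / (q' : ℝ)) - (b : ℝ) * ((p : ℝ) / (q : ℝ)) = 1 / 2)
    (N : ℤ) (hN : N = q * q' / (Int.gcd (p * q') (p' * q) : ℤ)) :
    ∃ s t : ℤ, IsCoprime s t ∧ 0 < a * t - b * s ∧ N = 2 * (a * t - b * s) ∧
      (p : ℝ) / q = s * (1 / N) ∧ (p' : ℝ) / q' = t * (1 / N) := by
  have hD := two_mul_sub_eq_mul_of_det_eq_half a b p q p' q' hq.ne' hq'.ne' hdet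
  have hqq' := mul_pos hq hq'
  have hg : 0 < Int.gcd (p * q') (p' * q) := by
    refine Int.gcd_pos_iff.2 (not_and_or.1 fun h ↦ ?_)
    rw [h.1, h.2] at hD
    omega
  set g : ℤ := (Int.gcd (p * q') (p' * q) : ℤ)
  have hg0 : 0 < g := Int.natCast_pos.2 hg
  set s := p * q' / g
  set t := p' * q / g
  have hs : p * q' = g * s := (Int.mul_ediv_cancel' (Int.gcd_dvd_left _ _)).symm
  have ht : p' * q = g * t := (Int.mul_ediv_cancel' (Int.gcd_dvd_right _ _)).symm
  have hgK : q * q' = g * (2 * (a * t - b * s)) := by rw [← hD, hs, ht]; ring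
  have hNK : N = 2 * (a * t - b * s) := by rw [hN, hgK, Int.mul_ediv_cancel_left _ hg0.ne']
  have hK : 0 < a * t - b * s := by
    have := (mul_pos_iff_of_pos_left hg0).1 (hgK ▸ hqq')
    omega
  have hgN : g * N = q * q' := by rw [hNK, hgK]
  have hN0 : N ≠ 0 := by omega
  refine ⟨s, t, Int.isCoprime_iff_gcd_eq_one.2 (Int.gcd_div_gcd_div_gcd hg), hK, hNK,
    intCast_div_eq_of_mul_eq hq.ne' hN0 hg0.ne' hs hgN,
    intCast_div_eq_of_mul_eq hq'.ne' hN0 hg0.ne' ht (hgN.trans (mul_comm q q'))⟩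

theorem stmt_5_general (a b p q p' q' : ℤ) (hq : 0 < q) (hq' : 0 < q')
    (hdet : (a : ℝ) * ((p' : ℝ) / (q' : ℝ)) - (b : ℝ) * ((p : ℝ) / (q : ℝ)) = 1 / 2)
    (N : ℤ) (hN : N = q * q' / (Int.gcd (p * q') (p' * q) : ℤ)) :
    2 ∣ N ∧
    ∃! b' : ℤ, 0 ≤ b' ∧ 2 * b' < N ∧
      latticePts !![(N : ℝ) / 2, (b' : ℝ); 0, 1 / (N : ℝ)]
        = latticePts !![(a : ℝ), (b : ℝ); (p : ℝ) / (q : ℝ), (p' : ℝ) / (q' : ℝ)] := by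
  obtain ⟨s, t, hst, hK, hNK, hc, hd⟩ :=
    exists_isCoprime_of_det_eq_half a b p q p' q' hq hq' hdet N hN
  obtain ⟨u, v, hA⟩ := exists_latticePts_eq_upperTriangular a b (1 / N) hst
  set K := a * t - b * s
  have hN2 : (N : ℝ) / 2 = K := by rw [hNK]; push_cast; ring
  have hN0 : (1 / N : ℝ) ≠ 0 := by rw [hNK]; push_cast; positivity
  have hlat (y : ℤ) : latticePts !![(N : ℝ) / 2, (y : ℝ); 0, 1 / (N : ℝ)]
      = latticePts !![(a : ℝ), b; p / q, p' / q'] ↔ y ≡ a * u + b * v [ZMOD K] := by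
    rw [hc, hd, hA, hN2, ← latticePts_upperTriangular_intCast_eq_iff K y _ hN0]
    push_cast [K]
    rfl
  refine ⟨⟨K, hNK⟩, ?_⟩
  simpa only [hlat, show ∀ y, 2 * y < N ↔ y < K by omega]
    using existsUnique_modEq_of_pos (a * u + b * v) hK

/-- Let `Λ = Aℤ²` be a lattice in `ℤ × ℝ` with generator matrix `A = [[a,b],[c,d]]`, where
`a, b ∈ ℤ`, `c = p/q`, `d = p'/q'` are rationals in lowest terms, and `det A = 1/2`.
Set `N = qq'/gcd(pq', p'q)`.  Then `N` is even and `Λ` possesses a uniquely determined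
generator matrix of the form `[[N/2, b'],[0, 1/N]]` with `b' ∈ ℤ`, `0 ≤ b' < N/2`. -/
theorem stmt_5 (a b p q p' q' : ℤ) (hq : 0 < q) (hq' : 0 < q')
    (hpq : Int.gcd p q = 1) (hpq' : Int.gcd p' q' = 1)
    (hdet : (a : ℝ) * ((p' : ℝ) / (q' : ℝ)) - (b : ℝ) * ((p : ℝ) / (q : ℝ)) = 1 / 2)
    (N : ℤ) (hN : N = q * q' / (Int.gcd (p * q') (p' * q) : ℤ)) :
    2 ∣ N ∧
    ∃! b' : ℤ, 0 ≤ b' ∧ 2 * b' < N ∧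
      latticePts !![(N : ℝ) / 2, (b' : ℝ); 0, 1 / (N : ℝ)]
        = latticePts !![(a : ℝ), (b : ℝ); (p : ℝ) / (q : ℝ), (p' : ℝ) / (q' : ℝ)] :=
  stmt_5_general a b p q p' q' hq hq' hdet N hN
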